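/- Let (X_n)_{n∈ω} be an increasing sequence of topological vector spaces over ℝ (or ℂ) in which each X_n is a linear subspace of X_{n+1} carrying the subspace topology, and each X_n carries the uniformity of its additive topological group (so that (X_n) is a tower of uniform spaces). Then the uniform direct limit u-lim X_n, with the linear operations of X = ⋃_n X_n and the topology induced by the direct limit uniformity, is a topological vector space; consequently this topology is the strongest topology on X turning X into a topological vector space and making all inclusions X_n → X continuous, i.e., the identity map u-lim X_n → l-lim X_n is a homeomorphism. -/

import Mathlib

/-
The sets `W₀ + W₁ + ⋯ + Wₙ` (all `n`, `Wⱼ` a zero neighbourhood of `X_j`) form a zero basis of a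
vector topology on `X`, and this is the finest vector topology making the inclusions continuous.
Every vector topology with continuous inclusions is coarser than `u-lim X_n`, because the
inclusions are uniformly continuous for its group uniformity. Conversely, let `D` be an entourage
of a uniformity making all inclusions uniformly continuous, and `x₀ ∈ X_{n₀}`. Choose entourages
`D₀ ⊆ D` and `D_{k+1} ○ D_{k+1} ⊆ D_k`, and `W_n` so small that adding an element of `W_n` to a
point of `X_{max n n₀}` moves it `D_{n+1}`-little. Then `x₀ + w₀ + ⋯ + wₙ₋₁` stays `D`-close to
`x₀`, so `u-lim X_n` is coarser than the vector topology above, and the two coincide.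
-/

open Set Filter Topology

universe u v

/-- The uniform direct limit uniformity of an increasing sequence of uniform subspaces of `E`:
the strongest (finest) uniformity on `E` making all inclusions uniformly continuous. -/
noncomputable def uDirLim {E : Type u} (S : ℕ → Set E)
    (u : (n : ℕ) → UniformSpace (S n)) : UniformSpace E :=
  sInf {u' : UniformSpace E |
    ∀ n, @UniformContinuous _ _ (u n) u' (Subtype.val : S n → E)}

open Pointwise Uniformity
open scoped SetRel

section FiniteSums

variable {E F : Type*} [AddCommMonoid E] [AddCommMonoid F] {A B : ℕ → Set E}

def finiteSums (A : ℕ → Set E) : Set E :=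
  ⋃ n, ∑ j ∈ Finset.range n, A j

theorem zero_mem_finiteSums : (0 : E) ∈ finiteSums A :=
  mem_iUnion.mpr ⟨0, by simp⟩

theorem zero_mem_finsetSum (h0 : ∀ j, (0 : E) ∈ A j) (t : Finset ℕ) : (0 : E) ∈ ∑ j ∈ t, A j := by
  simpa using finsetSum_mem_finsetSum t A 0 fun j _ => h0 j

theorem sum_range_subset_sum_range (h0 : ∀ j, (0 : E) ∈ A j) {m n : ℕ} (hmn : m ≤ n) :
    ∑ j ∈ Finset.range m, A j ⊆ ∑ j ∈ Finset.range n, A j := by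
  rw [← Finset.sum_range_add_sum_Ico _ hmn]
  exact subset_add_left _ (zero_mem_finsetSum h0 _)

theorem subset_finiteSums (h0 : ∀ j, (0 : E) ∈ A j) (n : ℕ) : A n ⊆ finiteSums A := by
  refine Subset.trans ?_ (subset_iUnion _ (n + 1))
  rw [Finset.sum_range_succ]
  exact subset_add_right _ (zero_mem_finsetSum h0 _)

theorem finiteSums_mono (h : ∀ j, A j ⊆ B j) : finiteSums A ⊆ finiteSums B :=
  iUnion_mono fun _ => finsetSum_subset_finsetSum _ _ _ fun j _ => h j

theorem finiteSums_add_subset (h0 : ∀ j, (0 : E) ∈ A j) (h : ∀ j, A j + A j ⊆ B j) :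
    finiteSums A + finiteSums A ⊆ finiteSums B := by
  rintro _ ⟨x, hx, y, hy, rfl⟩
  obtain ⟨m, hm⟩ := mem_iUnion.mp hx
  obtain ⟨n, hn⟩ := mem_iUnion.mp hy
  have hxy := add_mem_add (sum_range_subset_sum_range h0 (le_max_left m n) hm)
    (sum_range_subset_sum_range h0 (le_max_right m n) hn)
  rw [← Finset.sum_add_distrib] at hxy
  exact mem_iUnion.mpr ⟨max m n, finsetSum_subset_finsetSum _ _ _ (fun j _ => h j) hxy⟩

theorem finiteSums_subset_preimage (f : E →+ F) {B : ℕ → Set F} (h : ∀ j, A j ⊆ f ⁻¹' B j) :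
    finiteSums A ⊆ f ⁻¹' finiteSums B := by
  rw [← image_subset_iff, finiteSums, image_iUnion]
  refine iUnion_mono fun n => ?_
  rw [image_finsetSum]
  exact finsetSum_subset_finsetSum _ _ _ fun j _ => image_subset_iff.mpr (h j)

/-- A telescoping chain: `x₀ + a₀ + ⋯ + aₙ₋₁` is reached from `x₀` by steps in
`D 1, …, D n`, and these compose into `D 0`. -/
theorem mk_add_mem_of_finiteSums {D : ℕ → SetRel E E} (hrefl : ∀ k x, (x, x) ∈ D k)
    (hcomp : ∀ k, D (k + 1) ○ D (k + 1) ⊆ D k) {x₀ : E}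
    (hstep : ∀ n, ∀ y ∈ ∑ j ∈ Finset.range n, A j, ∀ a ∈ A n, (x₀ + y + a, x₀ + y) ∈ D (n + 1)) :
    ∀ x ∈ finiteSums A, (x₀ + x, x₀) ∈ D 0 := by
  have key : ∀ n, ∀ y ∈ ∑ j ∈ Finset.range n, A j, ∀ p, (p, x₀ + y) ∈ D n → (p, x₀) ∈ D 0 := by
    intro n
    induction n with
    | zero => simp
    | succ n ih =>
      rw [Finset.sum_range_succ]
      rintro _ ⟨y, hy, a, ha, rfl⟩ p hp
      rw [← add_assoc] at hp
      exact ih y hy p (hcomp n ⟨_, hp, hstep n y hy a ha⟩)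
  intro x hx
  obtain ⟨n, hn⟩ := mem_iUnion.mp hx
  exact key n x hn _ (hrefl n _)

end FiniteSums

theorem exists_seq_mem_uniformity_comp_subset {α : Type*} [UniformSpace α] {D : SetRel α α}
    (hD : D ∈ 𝓤 α) :
    ∃ D' : ℕ → SetRel α α, (∀ k, D' k ∈ 𝓤 α) ∧ D' 0 = D ∧ ∀ k, D' (k + 1) ○ D' (k + 1) ⊆ D' k := by
  choose! V hV hVcomp using fun s (hs : s ∈ 𝓤 α) => comp_mem_uniformity_sets hs
  have hmem : ∀ k, V^[k] D ∈ 𝓤 α := fun k => by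
    induction k with
    | zero => exact hD
    | succ k ih => rw [Function.iterate_succ_apply']; exact hV _ ih
  refine ⟨fun k => V^[k] D, hmem, rfl, fun k => ?_⟩
  simpa only [Function.iterate_succ_apply'] using hVcomp _ (hmem k)

section Tower

variable {R M : Type*} [Ring R] [AddCommGroup M] [Module R M] {S : ℕ → Submodule R M}

theorem continuous_inclusion_of_le [∀ n, TopologicalSpace (S n)] (mono : Monotone S)
    (hstep : ∀ n : ℕ, Continuous (Submodule.inclusion (mono n.le_succ))) {m n : ℕ} (hmn : m ≤ n) :
    Continuous (Submodule.inclusion (mono hmn)) := by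
  induction n, hmn using Nat.le_induction with
  | base => exact continuous_id
  | succ n hmn ih => exact (hstep n).comp ih

theorem sum_range_coe_image_subset (mono : Monotone S) (W : ∀ n, Set (S n)) (n : ℕ) :
    ∑ j ∈ Finset.range n, ((↑) : S j → M) '' W j ⊆ S n := by
  intro y hy
  obtain ⟨g, hg, rfl⟩ := (mem_finsetSum _ _ _).mp hy
  refine Submodule.sum_mem _ fun j hj => ?_
  obtain ⟨a, -, ha⟩ := hg hj
  exact ha ▸ mono (Finset.mem_range.mp hj).le a.2

variable [∀ n, TopologicalSpace (S n)] {u : ∀ n, UniformSpace (S n)}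

theorem uDirLim_toTopologicalSpace_le
    (hu : ∀ n, 𝓤[u n] = comap (fun p : S n × S n => p.1 - p.2) (𝓝 0))
    [TopologicalSpace M] [IsTopologicalAddGroup M]
    (hcont : ∀ n, Continuous ((↑) : S n → M)) :
    (uDirLim (fun n => (S n : Set M)) u).toTopologicalSpace ≤ ‹TopologicalSpace M› := by
  let := IsTopologicalAddGroup.rightUniformSpace M
  refine UniformSpace.toTopologicalSpace_mono (sInf_le fun n =>
    (?_ : UniformContinuous[u n, _] ((↑) : S n → M)))
  rw [UniformContinuous, hu n, uniformity_eq_comap_nhds_zero' M, tendsto_comap_iff]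
  have hneg : Tendsto (fun a : S n => -(a : M)) (𝓝 0) (𝓝 0) := by
    simpa using ((hcont n).tendsto 0).neg
  exact (hneg.comp tendsto_comap).congr fun p => by simp [sub_eq_add_neg]

theorem exists_finiteSums_subset_of_uniformContinuous
    (hu : ∀ n, 𝓤[u n] = comap (fun p : S n × S n => p.1 - p.2) (𝓝 0)) [UniformSpace M]
    (mono : Monotone S) (hincl : ∀ {m n} (h : m ≤ n), Continuous (Submodule.inclusion (mono h)))
    (hcont : ∀ n, UniformContinuous[u n, ‹_›] ((↑) : S n → M)) {x₀ : M} {n₀ : ℕ}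
    (hx₀ : x₀ ∈ S n₀) {D : SetRel M M} (hD : D ∈ 𝓤 M) :
    ∃ W : ∀ n, Set (S n), (∀ n, W n ∈ 𝓝 0) ∧
      ∀ x ∈ finiteSums fun n => ((↑) : S n → M) '' W n, (x₀ + x, x₀) ∈ D := by
  obtain ⟨D', hD'U, rfl, hD'comp⟩ := exists_seq_mem_uniformity_comp_subset hD
  have modulus : ∀ m k, ∃ V ∈ 𝓝 (0 : S m), ∀ a b : S m, a - b ∈ V → ((a : M), (b : M)) ∈ D' k := by
    intro m k
    obtain ⟨V, hV, hVD⟩ := mem_comap.mp (hu m ▸ hcont m (hD'U k))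
    exact ⟨V, hV, fun a b hab => @hVD (a, b) hab⟩
  choose V hV hVD using modulus
  refine ⟨fun n => Submodule.inclusion (mono (le_max_left n n₀)) ⁻¹' V (max n n₀) (n + 1),
    fun n => (hincl (le_max_left n n₀)).continuousAt.preimage_mem_nhds (by simpa using hV _ _), ?_⟩
  refine mk_add_mem_of_finiteSums (fun k x => refl_mem_uniformity (hD'U k)) hD'comp ?_
  rintro n y hy _ ⟨w, hw, rfl⟩
  let b : S (max n n₀) := ⟨x₀ + y, add_mem (mono (le_max_right n n₀) hx₀)
    (mono (le_max_left n n₀) (sum_range_coe_image_subset mono _ n hy))⟩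
  simpa [b] using hVD _ (n + 1) (b + Submodule.inclusion (mono (le_max_left n n₀)) w) b
    (by simpa using hw)

end Tower

section DirectLimit

variable {𝕜 E : Type*} [NontriviallyNormedField 𝕜] [AddCommGroup E] [Module 𝕜 E]
  {S : ℕ → Submodule 𝕜 E}

theorem finiteSums_subset_smul_preimage (c : 𝕜) {V W : ∀ n, Set (S n)}
    (h : ∀ n, V n ⊆ (c • ·) ⁻¹' W n) :
    finiteSums (fun n => ((↑) : S n → E) '' V n) ⊆
      (c • ·) ⁻¹' finiteSums fun n => ((↑) : S n → E) '' W n :=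
  finiteSums_subset_preimage (DistribSMul.toAddMonoidHom E c) fun n => by
    rintro _ ⟨v, hv, rfl⟩
    exact ⟨c • v, h n hv, rfl⟩

variable [∀ n, TopologicalSpace (S n)]

variable (S) in
def zeroNhdsSums : Set (Set E) :=
  (fun W : ∀ n, Set (S n) => finiteSums fun n => ((↑) : S n → E) '' W n) ''
    {W | ∀ n, W n ∈ 𝓝 0}

theorem coe_image_subset_finiteSums {W : ∀ n, Set (S n)} (hW : ∀ n, W n ∈ 𝓝 0) (n : ℕ) :
    ((↑) : S n → E) '' W n ⊆ finiteSums fun n => ((↑) : S n → E) '' W n :=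
  subset_finiteSums (A := fun n => ((↑) : S n → E) '' W n)
    (fun n => ⟨0, mem_of_mem_nhds (hW n), rfl⟩) n

variable [∀ n, ContinuousSMul 𝕜 (S n)]

theorem exists_zeroNhdsSums_subset_smul_preimage (c : 𝕜) {U : Set E} (hU : U ∈ zeroNhdsSums S) :
    ∃ V ∈ zeroNhdsSums S, V ⊆ (c • ·) ⁻¹' U := by
  obtain ⟨W, hW, rfl⟩ := hU
  refine ⟨_, mem_image_of_mem _ fun n => ?_, finiteSums_subset_smul_preimage c fun n => subset_rfl⟩
  exact (continuous_const_smul c).continuousAt.preimage_mem_nhds (by simpa using hW n)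

variable [∀ n, IsTopologicalAddGroup (S n)]

variable (S) in
/-- Its topology is the linear direct limit `l-lim X_n`. -/
def directLimitBasis (hunion : ∀ x : E, ∃ n, x ∈ S n) : ModuleFilterBasis 𝕜 E where
  toAddGroupFilterBasis := addGroupFilterBasisOfComm (zeroNhdsSums S)
    ⟨_, mem_image_of_mem _ fun _ => univ_mem⟩
    (by
      rintro _ _ ⟨W, hW, rfl⟩ ⟨W', hW', rfl⟩
      exact ⟨_, mem_image_of_mem _ fun n => inter_mem (hW n) (hW' n),
        subset_inter (finiteSums_mono fun n => image_mono inter_subset_left)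
          (finiteSums_mono fun n => image_mono inter_subset_right)⟩)
    (by
      rintro _ ⟨W, -, rfl⟩
      exact zero_mem_finiteSums)
    (by
      rintro _ ⟨W, hW, rfl⟩
      choose V hV hVW using fun n => exists_nhds_zero_half (hW n)
      refine ⟨_, mem_image_of_mem _ hV, finiteSums_add_subset
        (fun n => ⟨0, mem_of_mem_nhds (hV n), rfl⟩) fun n => ?_⟩
      rintro _ ⟨_, ⟨a, ha, rfl⟩, _, ⟨b, hb, rfl⟩, rfl⟩
      exact ⟨a + b, hVW n a ha b hb, rfl⟩)
    (fun U hU => by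
      simpa [neg_one_smul] using exists_zeroNhdsSums_subset_smul_preimage (-1 : 𝕜) hU)
  smul' := by
    rintro _ ⟨W, hW, rfl⟩
    choose V hV hVW using fun n => (nhds_basis_balanced 𝕜 (S n)).mem_iff.mp (hW n)
    refine ⟨Metric.closedBall 0 1, Metric.closedBall_mem_nhds 0 one_pos, _,
      mem_image_of_mem _ fun n => (hV n).1, ?_⟩
    rintro _ ⟨c, hc, x, hx, rfl⟩
    refine finiteSums_subset_smul_preimage c (fun n v hv => hVW n ?_) hx
    exact (hV n).2.smul_mem (mem_closedBall_zero_iff.mp hc) hv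
  smul_left' := exists_zeroNhdsSums_subset_smul_preimage
  smul_right' := by
    rintro m₀ _ ⟨W, hW, rfl⟩
    obtain ⟨N, hN⟩ := hunion m₀
    have hc : Tendsto (fun c : 𝕜 => c • (⟨m₀, hN⟩ : S N)) (𝓝 0) (𝓝 0) := by
      simpa using (tendsto_id (x := 𝓝 (0 : 𝕜))).smul_const (⟨m₀, hN⟩ : S N)
    filter_upwards [hc (hW N)] with c hc
    exact coe_image_subset_finiteSums hW N ⟨_, hc, rfl⟩

variable (hunion : ∀ x : E, ∃ n, x ∈ S n)

theorem continuous_coe_directLimitBasis (n : ℕ) :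
    Continuous[_, (directLimitBasis S hunion).topology] ((↑) : S n → E) := by
  let B := directLimitBasis S hunion
  let := B.topology
  refine continuous_of_continuousAt_zero (S n).subtype ?_
  rw [ContinuousAt, map_zero]
  refine B.toAddGroupFilterBasis.nhds_zero_hasBasis.tendsto_right_iff.mpr ?_
  rintro _ ⟨W, hW, rfl⟩
  filter_upwards [hW n] with a ha
  exact coe_image_subset_finiteSums hW n ⟨a, ha, rfl⟩

theorem directLimitBasis_topology_le_of_uniformContinuous (mono : Monotone S)
    (hincl : ∀ {m n} (h : m ≤ n), Continuous (Submodule.inclusion (mono h)))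
    {u : ∀ n, UniformSpace (S n)}
    (hu : ∀ n, 𝓤[u n] = comap (fun p : S n × S n => p.1 - p.2) (𝓝 0))
    (u' : UniformSpace E) (hcont : ∀ n, UniformContinuous[u n, u'] ((↑) : S n → E)) :
    (directLimitBasis S hunion).topology ≤ u'.toTopologicalSpace := by
  refine le_of_nhds_le_nhds fun x₀ => ?_
  obtain ⟨n₀, hx₀⟩ := hunion x₀
  rw [nhds_eq_comap_uniformity']
  refine ((directLimitBasis S hunion).toAddGroupFilterBasis.nhds_hasBasis x₀).le_basis_iff
    ((𝓤 E).basis_sets.comap _) |>.mpr fun D hD => ?_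
  obtain ⟨W, hW, hWD⟩ := exists_finiteSums_subset_of_uniformContinuous hu mono hincl hcont hx₀ hD
  exact ⟨_, mem_image_of_mem _ hW, by rintro _ ⟨x, hx, rfl⟩; exact hWD x hx⟩

theorem uDirLim_toTopologicalSpace_eq (mono : Monotone S)
    (hincl : ∀ {m n} (h : m ≤ n), Continuous (Submodule.inclusion (mono h)))
    {u : ∀ n, UniformSpace (S n)}
    (hu : ∀ n, 𝓤[u n] = comap (fun p : S n × S n => p.1 - p.2) (𝓝 0)) :
    (uDirLim (fun n => (S n : Set E)) u).toTopologicalSpace =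
      (directLimitBasis S hunion).topology := by
  let B := directLimitBasis S hunion
  let := B.topology
  have := B.toAddGroupFilterBasis.isTopologicalAddGroup
  refine le_antisymm (uDirLim_toTopologicalSpace_le hu (continuous_coe_directLimitBasis hunion)) ?_
  rw [uDirLim, UniformSpace.toTopologicalSpace_sInf]
  exact le_iInf₂ fun u' hu' =>
    directLimitBasis_topology_le_of_uniformContinuous hunion mono hincl hu u' hu'

end DirectLimit

theorem statement12_general {𝕜 : Type v} [RCLike 𝕜] {E : Type u} [AddCommGroup E] [Module 𝕜 E]
    (S : ℕ → Submodule 𝕜 E) (mono : Monotone S) (hunion : ∀ x : E, ∃ n, x ∈ S n)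
    (t : (n : ℕ) → TopologicalSpace (S n))
    (htag : ∀ n, @IsTopologicalAddGroup (S n) (t n) _)
    (hsmul : ∀ n, @ContinuousSMul 𝕜 (S n) _ _ (t n))
    (hcompat_t : ∀ n, t n =
      TopologicalSpace.induced (⇑(Submodule.inclusion (mono (Nat.le_succ n)))) (t (n + 1)))
    (u : (n : ℕ) → UniformSpace (S n))
    (hbasis : ∀ n, (@uniformity _ (u n)).HasBasis
      (fun U : Set (S n) => U ∈ @nhds _ (t n) (0 : S n))
      (fun U => {p : S n × S n | p.1 - p.2 ∈ U})) :
    @IsTopologicalAddGroup E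
        (uDirLim (fun n => (S n : Set E)) u).toTopologicalSpace _ ∧
      @ContinuousSMul 𝕜 E _ _
        (uDirLim (fun n => (S n : Set E)) u).toTopologicalSpace ∧
      (∀ n, @Continuous _ _ (t n)
        (uDirLim (fun n => (S n : Set E)) u).toTopologicalSpace
        (fun x : S n => (x : E))) ∧
      ∀ t' : TopologicalSpace E, @IsTopologicalAddGroup E t' _ →
        @ContinuousSMul 𝕜 E _ _ t' →
        (∀ n, @Continuous _ _ (t n) t' (fun x : S n => (x : E))) →
        (uDirLim (fun n => (S n : Set E)) u).toTopologicalSpace ≤ t' := by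
  have hincl {m n : ℕ} (h : m ≤ n) : Continuous (Submodule.inclusion (mono h)) :=
    continuous_inclusion_of_le mono (fun k => continuous_iff_le_induced.mpr (hcompat_t k).le) h
  have hu : ∀ n, 𝓤[u n] = comap (fun p : S n × S n => p.1 - p.2) (𝓝 0) := fun n =>
    (hbasis n).eq_of_same_basis ((𝓝 (0 : S n)).basis_sets.comap _)
  have hB := uDirLim_toTopologicalSpace_eq hunion mono hincl hu
  refine ⟨hB ▸ AddGroupFilterBasis.isTopologicalAddGroup _,
    hB ▸ ModuleFilterBasis.continuousSMul _, fun n => hB ▸ continuous_coe_directLimitBasis hunion n,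
    fun t' _ _ hcont => uDirLim_toTopologicalSpace_le hu hcont⟩

/-- Let `(X_n)` be an increasing sequence of linear subspaces of a vector space `E` over
`𝕜 ∈ {ℝ, ℂ}` with union `E`, each carrying a vector topology making it a topological linear
subspace of the next one, and each carrying the uniformity of its additive topological group
(with basic entourages `{(x,y) : x - y ∈ U}`, `U` a neighborhood of `0`), so that `(X_n)` is
a tower of uniform spaces.  Then the uniform direct limit `u-lim X_n`, i.e. `E` with the
topology induced by the direct limit uniformity, is a topological vector space; moreover this
topology makes all inclusions `X_n → E` continuous and is the strongest (finest) topology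
turning `E` into a topological vector space and making all inclusions continuous, i.e. the
identity map `u-lim X_n → l-lim X_n` is a homeomorphism. -/
theorem statement12 {𝕜 : Type v} [RCLike 𝕜] {E : Type u} [AddCommGroup E] [Module 𝕜 E]
    (S : ℕ → Submodule 𝕜 E) (mono : Monotone S) (hunion : ∀ x : E, ∃ n, x ∈ S n)
    (t : (n : ℕ) → TopologicalSpace (S n))
    (htag : ∀ n, @IsTopologicalAddGroup (S n) (t n) _)
    (hsmul : ∀ n, @ContinuousSMul 𝕜 (S n) _ _ (t n))
    (hcompat_t : ∀ n, t n =
      TopologicalSpace.induced (⇑(Submodule.inclusion (mono (Nat.le_succ n)))) (t (n + 1)))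
    (u : (n : ℕ) → UniformSpace (S n))
    (htop : ∀ n, (u n).toTopologicalSpace = t n)
    (hbasis : ∀ n, (@uniformity _ (u n)).HasBasis
      (fun U : Set (S n) => U ∈ @nhds _ (t n) (0 : S n))
      (fun U => {p : S n × S n | p.1 - p.2 ∈ U}))
    (hcompat_u : ∀ n, u n =
      UniformSpace.comap (⇑(Submodule.inclusion (mono (Nat.le_succ n)))) (u (n + 1))) :
    @IsTopologicalAddGroup E
        (uDirLim (fun n => (S n : Set E)) u).toTopologicalSpace _ ∧
      @ContinuousSMul 𝕜 E _ _
        (uDirLim (fun n => (S n : Set E)) u).toTopologicalSpace ∧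
      (∀ n, @Continuous _ _ (t n)
        (uDirLim (fun n => (S n : Set E)) u).toTopologicalSpace
        (fun x : S n => (x : E))) ∧
      ∀ t' : TopologicalSpace E, @IsTopologicalAddGroup E t' _ →
        @ContinuousSMul 𝕜 E _ _ t' →
        (∀ n, @Continuous _ _ (t n) t' (fun x : S n => (x : E))) →
        (uDirLim (fun n => (S n : Set E)) u).toTopologicalSpace ≤ t' :=
  statement12_general S mono hunion t htag hsmul hcompat_t u hbasis
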